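/- Let S, D be positive integers, γ ∈ ℝ^D, and R > 0. If Y ∈ ℝ^{S×D} has every row of Euclidean norm at least R, then the map RMSNorm is differentiable at Y and the operator norm of its Fréchet derivative satisfies ‖D RMSNorm(Y)‖₂ ≤ max_j |γ_j| / R. -/

import Mathlib

open scoped BigOperators Matrix

attribute [local instance] Matrix.frobeniusNormedAddCommGroup Matrix.frobeniusNormedSpace

/-- Euclidean norm of a row vector. -/
noncomputable def rowNorm {D : ℕ} (v : Fin D → ℝ) : ℝ :=
  Real.sqrt (∑ j, v j ^ 2)

/-- Row-wise RMS normalization with scaling parameter `γ`: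
`RMSNorm(Y)_{[i,:]} = diag(γ) Y_{[i,:]} / ‖Y_{[i,:]}‖`. -/
noncomputable def RMSNorm {S D : ℕ} (γ : Fin D → ℝ)
    (Y : Matrix (Fin S) (Fin D) ℝ) : Matrix (Fin S) (Fin D) ℝ :=
  Matrix.of fun i j => γ j * Y i j / rowNorm (Y i)

/-- The identity, as a linear equivalence between matrices and functions. -/
noncomputable def matPi (S D : ℕ) :
    Matrix (Fin S) (Fin D) ℝ ≃ₗ[ℝ] (Fin S → Fin D → ℝ) where
  toFun M := fun i j => M i j
  invFun f := Matrix.of f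
  map_add' _ _ := rfl
  map_smul' _ _ := rfl
  left_inv _ := rfl
  right_inv _ := rfl

/-- The identity, as a continuous linear equivalence between matrices (Frobenius norm) and
functions (sup norm). -/
noncomputable def matPiL (S D : ℕ) :
    Matrix (Fin S) (Fin D) ℝ ≃L[ℝ] (Fin S → Fin D → ℝ) :=
  (matPi S D).toContinuousLinearEquiv

/-- The candidate derivative of `RMSNorm` at `Y`, as a linear map on functions. -/
noncomputable def rmsLin {S D : ℕ} (γ : Fin D → ℝ) (Y : Matrix (Fin S) (Fin D) ℝ) :
    (Fin S → Fin D → ℝ) →ₗ[ℝ] (Fin S → Fin D → ℝ) where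
  toFun H := fun i j => γ j * (H i j / rowNorm (Y i)
      - Y i j * (∑ k, Y i k * H i k) / rowNorm (Y i) ^ 3)
  map_add' H H' := by
    funext i j
    have h : (∑ k, Y i k * ((H + H') i k))
        = (∑ k, Y i k * H i k) + ∑ k, Y i k * H' i k := by
      simp only [Pi.add_apply, mul_add, Finset.sum_add_distrib]
    rw [h]
    simp only [Pi.add_apply]
    ring
  map_smul' c H := by
    funext i j
    have h : (∑ k, Y i k * ((c • H) i k)) = c * ∑ k, Y i k * H i k := by
      simp only [Pi.smul_apply, smul_eq_mul, Finset.mul_sum]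
      exact Finset.sum_congr rfl fun k _ => by ring
    rw [h]
    simp only [Pi.smul_apply, smul_eq_mul, RingHom.id_apply]
    ring

/-- The candidate derivative, as a continuous linear map on functions. -/
noncomputable def rmsLinL {S D : ℕ} (γ : Fin D → ℝ) (Y : Matrix (Fin S) (Fin D) ℝ) :
    (Fin S → Fin D → ℝ) →L[ℝ] (Fin S → Fin D → ℝ) :=
  (rmsLin γ Y).toContinuousLinearMap

theorem rms_compDeriv {S D : ℕ} (γ : Fin D → ℝ) (R : ℝ) (hR : 0 < R)
    (Y : Matrix (Fin S) (Fin D) ℝ) (hrow : ∀ i, R ≤ rowNorm (Y i)) (i : Fin S) (j : Fin D) :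
    HasFDerivAt (fun X : Fin S → Fin D → ℝ => γ j * X i j / Real.sqrt (∑ k, X i k ^ 2))
      ((ContinuousLinearMap.proj j).comp
        ((ContinuousLinearMap.proj i).comp (rmsLinL γ Y))) (fun i j => Y i j) := by
  set Yf : Fin S → Fin D → ℝ := fun i j => Y i j with hYf
  have hn : 0 < rowNorm (Y i) := lt_of_lt_of_le hR (hrow i)
  have hs : 0 < ∑ k, Y i k ^ 2 := Real.sqrt_pos.mp hn
  have hm : Real.sqrt (∑ k, Y i k ^ 2) = rowNorm (Y i) := rfl
  have hXik : ∀ k : Fin D, HasFDerivAt (fun X : Fin S → Fin D → ℝ => X i k)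
      ((ContinuousLinearMap.proj k).comp (ContinuousLinearMap.proj (R := ℝ)
        (φ := fun _ : Fin S => Fin D → ℝ) i)) Yf :=
    fun k => by
      have := (hasFDerivAt_apply (𝕜 := ℝ) k (Yf i)).comp Yf (hasFDerivAt_apply (𝕜 := ℝ) i Yf)
      exact this
  have hsum : HasFDerivAt (fun X : Fin S → Fin D → ℝ => ∑ k, X i k ^ 2)
      (∑ k, (Yf i k • ((ContinuousLinearMap.proj k).comp (ContinuousLinearMap.proj (R := ℝ)
          (φ := fun _ : Fin S => Fin D → ℝ) i))
        + Yf i k • ((ContinuousLinearMap.proj k).comp (ContinuousLinearMap.proj (R := ℝ)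
          (φ := fun _ : Fin S => Fin D → ℝ) i)))) Yf :=
    HasFDerivAt.fun_sum fun k _ => by simpa only [pow_two] using (hXik k).fun_mul (hXik k)
  have hinv : HasDerivAt (fun t : ℝ => (Real.sqrt t)⁻¹)
      (-(1 / (2 * Real.sqrt (∑ k, Y i k ^ 2))) / (Real.sqrt (∑ k, Y i k ^ 2)) ^ 2)
      (∑ k, Y i k ^ 2) :=
    (Real.hasDerivAt_sqrt hs.ne').inv (by rw [hm]; exact hn.ne')
  have hinner := hinv.comp_hasFDerivAt Yf hsum
  have hnum : HasFDerivAt (fun X : Fin S → Fin D → ℝ => γ j * X i j)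
      (γ j • ((ContinuousLinearMap.proj j).comp (ContinuousLinearMap.proj (R := ℝ)
        (φ := fun _ : Fin S => Fin D → ℝ) i))) Yf := (hXik j).const_mul (γ j)
  have hmul := hnum.fun_mul hinner
  have hfun : (fun X : Fin S → Fin D → ℝ => γ j * X i j / Real.sqrt (∑ k, X i k ^ 2))
      = fun X => (γ j * X i j) * ((fun t : ℝ => (Real.sqrt t)⁻¹) ∘
          fun X : Fin S → Fin D → ℝ => ∑ k, X i k ^ 2) X := by
    funext X; simp [div_eq_mul_inv, Function.comp]
  rw [hfun]
  refine hmul.congr_fderiv (Eq.symm ?_)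
  ext H
  simp only [ContinuousLinearMap.coe_comp', Function.comp_apply,
    ContinuousLinearMap.proj_apply, ContinuousLinearMap.add_apply,
    ContinuousLinearMap.coe_smul', Pi.smul_apply, ContinuousLinearMap.sum_apply,
    smul_eq_mul, rmsLinL, LinearMap.coe_toContinuousLinearMap', rmsLin, LinearMap.coe_mk,
    AddHom.coe_mk, Finset.sum_add_distrib, Finset.mul_sum]
  rw [show (∑ i_1, Y i j * (Y i i_1 * H i i_1)) = Y i j * ∑ k, Y i k * H i k from
    (Finset.mul_sum _ _ _).symm, hm]
  field_simp
  ring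

theorem rms_mainDeriv {S D : ℕ} (γ : Fin D → ℝ) (R : ℝ) (hR : 0 < R)
    (Y : Matrix (Fin S) (Fin D) ℝ) (hrow : ∀ i, R ≤ rowNorm (Y i)) :
    HasFDerivAt (RMSNorm γ)
      (((matPiL S D).symm : (Fin S → Fin D → ℝ) →L[ℝ] Matrix (Fin S) (Fin D) ℝ).comp
        ((rmsLinL γ Y).comp (matPiL S D : Matrix (Fin S) (Fin D) ℝ →L[ℝ] (Fin S → Fin D → ℝ))))
      Y := by
  have hF : HasFDerivAt (fun X : Fin S → Fin D → ℝ =>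
      (fun i j => γ j * X i j / Real.sqrt (∑ k, X i k ^ 2) : Fin S → Fin D → ℝ))
      (rmsLinL γ Y) (fun i j => Y i j) := by
    apply hasFDerivAt_pi''
    intro i
    apply hasFDerivAt_pi''
    intro j
    exact rms_compDeriv γ R hR Y hrow i j
  have he : HasFDerivAt (⇑(matPiL S D))
      (matPiL S D : Matrix (Fin S) (Fin D) ℝ →L[ℝ] (Fin S → Fin D → ℝ)) Y :=
    (matPiL S D).hasFDerivAt
  have h2 := hF.comp Y he
  have h3 := ((matPiL S D).symm.hasFDerivAt).comp Y h2
  exact h3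

theorem frob_norm_eq {S D : ℕ} (A : Matrix (Fin S) (Fin D) ℝ) :
    ‖A‖ = Real.sqrt (∑ i, ∑ j, (A i j) ^ 2) := by
  rw [Matrix.frobenius_norm_def, Real.sqrt_eq_rpow]
  congr 1
  refine Finset.sum_congr rfl fun i _ => Finset.sum_congr rfl fun j _ => ?_
  rw [show (2 : ℝ) = ((2 : ℕ) : ℝ) by norm_num, Real.rpow_natCast, Real.norm_eq_abs, sq_abs]

/-- if every row of `Y` has Euclidean norm at least `R > 0`, then `RMSNorm` is
differentiable at `Y` and `‖D RMSNorm(Y)‖ ≤ max_j |γ_j| / R`, in the operator norm induced by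
the Frobenius norm. -/
theorem rmsnorm_jacobian_bound
    {S D : ℕ} (hS : 0 < S) (hD : 0 < D)
    (γ : Fin D → ℝ) (R : ℝ) (hR : 0 < R)
    (Y : Matrix (Fin S) (Fin D) ℝ) (hrow : ∀ i, R ≤ rowNorm (Y i)) :
    DifferentiableAt ℝ (RMSNorm γ) Y ∧
      ContinuousLinearMap.opNorm (fderiv ℝ (RMSNorm γ) Y) ≤ (⨆ j, |γ j|) / R := by
  have hmain := rms_mainDeriv γ R hR Y hrow
  set G : ℝ := ⨆ j, |γ j| with hG
  have hbdd : BddAbove (Set.range fun j => |γ j|) := (Set.finite_range _).bddAbove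
  have hline : ∀ j, |γ j| ≤ G := fun j => le_ciSup hbdd j
  have hG0 : 0 ≤ G := le_trans (abs_nonneg (γ ⟨0, hD⟩)) (hline ⟨0, hD⟩)
  refine ⟨hmain.differentiableAt, ?_⟩
  erw [hmain.fderiv]
  refine ContinuousLinearMap.opNorm_le_bound _ (div_nonneg hG0 hR.le) fun H => ?_
  set L := (((matPiL S D).symm : (Fin S → Fin D → ℝ) →L[ℝ] Matrix (Fin S) (Fin D) ℝ).comp
    ((rmsLinL γ Y).comp
      (matPiL S D : Matrix (Fin S) (Fin D) ℝ →L[ℝ] (Fin S → Fin D → ℝ)))) with hL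
  have happly : ∀ i j, (L H) i j
      = γ j * (H i j / rowNorm (Y i) - Y i j * (∑ k, Y i k * H i k) / rowNorm (Y i) ^ 3) :=
    fun i j => rfl
  rw [frob_norm_eq, frob_norm_eq]
  have key : ∑ i, ∑ j, ((L H) i j) ^ 2 ≤ (G / R) ^ 2 * ∑ i, ∑ j, (H i j) ^ 2 := by
    rw [Finset.mul_sum]
    refine Finset.sum_le_sum fun i _ => ?_
    have hn : 0 < rowNorm (Y i) := lt_of_lt_of_le hR (hrow i)
    have hs0 : (0:ℝ) ≤ ∑ k, Y i k ^ 2 := Finset.sum_nonneg fun k _ => sq_nonneg _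
    have hm2 : rowNorm (Y i) ^ 2 = ∑ k, Y i k ^ 2 := Real.sq_sqrt hs0
    set σ : ℝ := ∑ k, Y i k * H i k with hσ
    set c : ℝ := σ / rowNorm (Y i) ^ 2 with hc
    have h1 : ∀ j, ((L H) i j) ^ 2
        = (γ j / rowNorm (Y i)) ^ 2 * (H i j - Y i j * c) ^ 2 := by
      intro j
      rw [happly i j, hc]
      field_simp
      ring
    have hPle : ∑ j, (H i j - Y i j * c) ^ 2 ≤ ∑ j, (H i j) ^ 2 := by
      have e1 : ∑ j, (H i j - Y i j * c) ^ 2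
          = (∑ j, (H i j) ^ 2) - (2 * c) * (∑ j, Y i j * H i j)
            + c ^ 2 * (∑ j, (Y i j) ^ 2) := by
        rw [Finset.sum_congr rfl (fun j _ => show (H i j - Y i j * c) ^ 2
          = ((H i j) ^ 2 - (2 * c) * (Y i j * H i j)) + c ^ 2 * (Y i j) ^ 2 from by ring)]
        rw [Finset.sum_add_distrib, Finset.sum_sub_distrib, ← Finset.mul_sum, ← Finset.mul_sum]
      have hcm : c * rowNorm (Y i) ^ 2 = σ := by
        rw [hc]; field_simp
      have hcσ : 0 ≤ c * σ := by
        have h2 : c * σ = σ ^ 2 / rowNorm (Y i) ^ 2 := by rw [hc]; ring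
        rw [h2]; exact div_nonneg (sq_nonneg _) (sq_nonneg _)
      have h3 : c ^ 2 * rowNorm (Y i) ^ 2 = c * σ := by rw [← hcm]; ring
      rw [e1, ← hσ, ← hm2]
      linarith [hcσ, h3]
    calc ∑ j, ((L H) i j) ^ 2
        = ∑ j, (γ j / rowNorm (Y i)) ^ 2 * (H i j - Y i j * c) ^ 2 :=
          Finset.sum_congr rfl fun j _ => h1 j
      _ ≤ ∑ j, (G / R) ^ 2 * (H i j - Y i j * c) ^ 2 := by
          refine Finset.sum_le_sum fun j _ => ?_
          have hγ : (γ j) ^ 2 ≤ G ^ 2 := by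
            have := pow_le_pow_left₀ (abs_nonneg (γ j)) (hline j) 2
            rwa [sq_abs] at this
          have hmR : R ^ 2 ≤ rowNorm (Y i) ^ 2 := pow_le_pow_left₀ hR.le (hrow i) 2
          have hfac : (γ j / rowNorm (Y i)) ^ 2 ≤ (G / R) ^ 2 := by
            rw [div_pow, div_pow]
            exact div_le_div₀ (sq_nonneg G) hγ (by positivity) hmR
          exact mul_le_mul_of_nonneg_right hfac (sq_nonneg _)
      _ = (G / R) ^ 2 * ∑ j, (H i j - Y i j * c) ^ 2 := (Finset.mul_sum _ _ _).symm
      _ ≤ (G / R) ^ 2 * ∑ j, (H i j) ^ 2 := mul_le_mul_of_nonneg_left hPle (sq_nonneg _)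
  calc Real.sqrt (∑ i, ∑ j, ((L H) i j) ^ 2)
      ≤ Real.sqrt ((G / R) ^ 2 * ∑ i, ∑ j, (H i j) ^ 2) := Real.sqrt_le_sqrt key
    _ = (G / R) * Real.sqrt (∑ i, ∑ j, (H i j) ^ 2) := by
        rw [Real.sqrt_mul (sq_nonneg _), Real.sqrt_sq (div_nonneg hG0 hR.le)]
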